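/- Let q be an odd prime with q ≡ 1 (mod 8) or q ≡ −1 (mod 8). Then P̃_{q−1} ≡ 2 (mod q²), where P̃_n is the n-th Pell-Lucas number. -/
import Mathlib

/-- The Pell-Lucas numbers: `P̃_0 = 2`, `P̃_1 = 2`, `P̃_i = 2 * P̃_{i-1} + P̃_{i-2}`. -/
def pellLucas : ℕ → ℤ
  | 0 => 2
  | 1 => 2
  | n + 2 => 2 * pellLucas (n + 1) + pellLucas n

/-- Pair `(H n, P n)` with `(1+√2)^n = H n + P n √2`. -/
def pellHP : ℕ → ℤ × ℤ
  | 0 => (1, 0)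
  | n + 1 => ((pellHP n).1 + 2 * (pellHP n).2, (pellHP n).1 + (pellHP n).2)

lemma pellHP_succ (n : ℕ) :
    pellHP (n + 1) = ((pellHP n).1 + 2 * (pellHP n).2, (pellHP n).1 + (pellHP n).2) := rfl

lemma pellLucas_eq_aux : ∀ n, pellLucas n = 2 * (pellHP n).1 ∧
    pellLucas (n + 1) = 2 * (pellHP (n + 1)).1 := by
  intro n
  induction n with
  | zero => simp [pellLucas, pellHP]
  | succ n ih =>
    refine ⟨ih.2, ?_⟩
    show 2 * pellLucas (n + 1) + pellLucas n = _
    rw [ih.1, ih.2, pellHP_succ (n + 1), pellHP_succ n]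
    ring

lemma pellLucas_eq (n : ℕ) : pellLucas n = 2 * (pellHP n).1 := (pellLucas_eq_aux n).1

lemma pellHP_norm (n : ℕ) :
    (pellHP n).1 ^ 2 - 2 * (pellHP n).2 ^ 2 = (-1) ^ n := by
  induction n with
  | zero => simp [pellHP]
  | succ n ih =>
    rw [pellHP_succ]
    simp only [pow_succ]
    linear_combination (-1 : ℤ) * ih

lemma pellHP_add (a b : ℕ) :
    (pellHP (a + b)).1 = (pellHP a).1 * (pellHP b).1 + 2 * (pellHP a).2 * (pellHP b).2 ∧
    (pellHP (a + b)).2 = (pellHP a).1 * (pellHP b).2 + (pellHP a).2 * (pellHP b).1 := by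
  induction b with
  | zero => simp [pellHP]
  | succ b ih =>
    rw [show a + (b + 1) = (a + b) + 1 by ring, pellHP_succ, pellHP_succ b]
    constructor
    · simp only [ih.1, ih.2]; ring
    · simp only [ih.1, ih.2]; ring

lemma pellHP_cast_plus {R : Type*} [CommRing R] (s : R) (hs : s ^ 2 = 2) (n : ℕ) :
    ((pellHP n).1 : R) + (pellHP n).2 * s = (1 + s) ^ n := by
  induction n with
  | zero => simp [pellHP]
  | succ n ih =>
    rw [pellHP_succ, pow_succ]
    push_cast
    linear_combination (-(pellHP n).2 : R) * hs + (1 + s) * ih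

lemma pellHP_cast_minus {R : Type*} [CommRing R] (s : R) (hs : s ^ 2 = 2) (n : ℕ) :
    ((pellHP n).1 : R) - (pellHP n).2 * s = (1 - s) ^ n := by
  induction n with
  | zero => simp [pellHP]
  | succ n ih =>
    rw [pellHP_succ, pow_succ]
    push_cast
    linear_combination (-(pellHP n).2 : R) * hs + (1 - s) * ih

/-- **(23).** If `q` is an odd prime with `q ≡ ±1 (mod 8)`, then
`P̃_{q-1} ≡ 2 (mod q²)`. -/
theorem pellLucas_qsub1_congr (q : ℕ) (hq : q.Prime) (hodd : Odd q)
    (h8 : (q : ℤ) ≡ 1 [ZMOD 8] ∨ (q : ℤ) ≡ -1 [ZMOD 8]) :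
    pellLucas (q - 1) ≡ 2 [ZMOD (q : ℤ) ^ 2] := by
  haveI : Fact q.Prime := ⟨hq⟩
  have hq2 : q ≠ 2 := by rintro rfl; exact (Nat.not_odd_iff_even.mpr (by norm_num)) hodd
  have hq3 : 3 ≤ q := by
    rcases hodd with ⟨k, hk⟩
    have := hq.two_le; omega
  -- q % 8 is 1 or 7
  have h8' : q % 8 = 1 ∨ q % 8 = 7 := by
    rcases h8 with h | h <;> [left; right] <;>
    · unfold Int.ModEq at h
      omega
  -- a square root of 2 mod q
  obtain ⟨s, hs⟩ : IsSquare (2 : ZMod q) := (ZMod.exists_sq_eq_two_iff hq2).mpr h8'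
  have hs2 : s ^ 2 = 2 := by rw [pow_two]; exact hs.symm
  have h2ne : (2 : ZMod q) ≠ 0 := by
    intro h
    have : (q : ℕ) ∣ 2 := by
      have := (ZMod.natCast_eq_zero_iff 2 q).mp (by exact_mod_cast h)
      exact this
    have := Nat.le_of_dvd (by norm_num) this; omega
  have hsne : s ≠ 0 := by
    intro h; rw [h] at hs2; simp at hs2; exact h2ne hs2.symm
  -- (1+s)^(q-1) = 1 and (1-s)^(q-1) = 1
  have hsq : s ^ q = s := by
    have h : s ^ ((q - 1) + 1) = s := by
      rw [pow_succ, ZMod.pow_card_sub_one_eq_one hsne, one_mul]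
    rwa [show (q - 1) + 1 = q by omega] at h
  have hplus_q : (1 + s) ^ q = 1 + s := by
    rw [add_pow_char _ _ q, one_pow, hsq]
  have hminus_q : (1 - s) ^ q = 1 - s := by
    have : (1 - s) = 1 + (-s) := by ring
    rw [this, add_pow_char _ _ q, one_pow, hodd.neg_pow, hsq]
  have hplus : (1 + s) ^ (q - 1) = 1 := by
    have hu : (1 + s) * (s - 1) = 1 := by linear_combination hs2
    have h1 : (1 + s) ^ (q - 1) * (1 + s) = 1 + s := by
      rw [← pow_succ, show (q - 1) + 1 = q by omega, hplus_q]
    calc (1 + s) ^ (q - 1) = (1 + s) ^ (q - 1) * ((1 + s) * (s - 1)) := by rw [hu, mul_one]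
      _ = ((1 + s) ^ (q - 1) * (1 + s)) * (s - 1) := by ring
      _ = (1 + s) * (s - 1) := by rw [h1]
      _ = 1 := hu
  have hminus : (1 - s) ^ (q - 1) = 1 := by
    have hu : (1 - s) * (-1 - s) = 1 := by linear_combination hs2
    have h1 : (1 - s) ^ (q - 1) * (1 - s) = 1 - s := by
      rw [← pow_succ, show (q - 1) + 1 = q by omega, hminus_q]
    calc (1 - s) ^ (q - 1) = (1 - s) ^ (q - 1) * ((1 - s) * (-1 - s)) := by rw [hu, mul_one]
      _ = ((1 - s) ^ (q - 1) * (1 - s)) * (-1 - s) := by ring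
      _ = (1 - s) * (-1 - s) := by rw [h1]
      _ = 1 := hu
  -- hence H_{q-1} ≡ 1, P_{q-1} ≡ 0 mod q
  set N := q - 1 with hN
  have hcp : ((pellHP N).1 : ZMod q) + (pellHP N).2 * s = 1 := by
    rw [pellHP_cast_plus s hs2, hplus]
  have hcm : ((pellHP N).1 : ZMod q) - (pellHP N).2 * s = 1 := by
    rw [pellHP_cast_minus s hs2, hminus]
  have hH : ((pellHP N).1 : ZMod q) = 1 := by
    have h2 : (2 : ZMod q) * (pellHP N).1 = 2 := by linear_combination hcp + hcm
    field_simp at h2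
    exact h2
  have hP : ((pellHP N).2 : ZMod q) = 0 := by
    have h2 : ((pellHP N).2 : ZMod q) * s * 2 = 0 := by linear_combination hcp - hcm
    rcases mul_eq_zero.mp h2 with h | h
    · rcases mul_eq_zero.mp h with h | h
      · exact h
      · exact absurd h hsne
    · exact absurd h h2ne
  -- set m = (q-1)/2
  obtain ⟨m, hm⟩ : ∃ m, N = m + m := by
    rcases hodd with ⟨k, hk⟩; exact ⟨k, by omega⟩
  have hHadd := (pellHP_add m m).1
  have hPadd := (pellHP_add m m).2
  rw [← hm] at hHadd hPadd
  -- q ∣ 2 * H_m * P_m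
  have hHP0 : ((pellHP m).1 : ZMod q) * (pellHP m).2 = 0 := by
    have : ((pellHP m).1 * (pellHP m).2 + (pellHP m).2 * (pellHP m).1 : ℤ) = 
        2 * ((pellHP m).1 * (pellHP m).2) := by ring
    have h0 : ((2 * ((pellHP m).1 * (pellHP m).2) : ℤ) : ZMod q) = 0 := by
      rw [← this]; push_cast [← hPadd]; exact_mod_cast hP
    push_cast at h0
    rcases mul_eq_zero.mp h0 with h | h
    · exact absurd h h2ne
    · exact h
  have hnorm := pellHP_norm m
  set A := (pellHP m).1 with hA
  set B := (pellHP m).2 with hB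
  have c2 : ((A : ZMod q)) ^ 2 + 2 * ((B : ZMod q)) ^ 2 = 1 := by
    have h := hH
    rw [hHadd] at h
    push_cast at h
    linear_combination h
  have hq1 : q = 2 * m + 1 := by omega
  -- final divisibility step
  have main : ∀ c : ℤ, (q : ℤ) ∣ c → ∀ k : ℤ, pellLucas N - 2 = k * c ^ 2 →
      pellLucas N ≡ 2 [ZMOD (q : ℤ) ^ 2] := by
    intro c hc k hk
    have hdvd : ((q : ℤ)) ^ 2 ∣ pellLucas N - 2 := by
      rw [hk]
      exact Dvd.dvd.mul_left (pow_dvd_pow_of_dvd hc 2) k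
    have h2 : ((q : ℤ)) ^ 2 ∣ 2 - pellLucas N := by
      rw [show (2 : ℤ) - pellLucas N = -(pellLucas N - 2) by ring]
      exact dvd_neg.mpr hdvd
    exact Int.modEq_iff_dvd.mpr h2
  rcases h8' with h81 | h87
  · -- q ≡ 1 (mod 8): m even, q ∣ B
    have hmev : Even m := by rw [Nat.even_iff]; omega
    have hn1 : A ^ 2 - 2 * B ^ 2 = 1 := by rw [hnorm, hmev.neg_one_pow]
    have c1 : ((A : ZMod q)) ^ 2 - 2 * ((B : ZMod q)) ^ 2 = 1 := by
      have := congrArg (fun x : ℤ => (x : ZMod q)) hn1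
      push_cast at this
      linear_combination this
    have hBdvd : (q : ℤ) ∣ B := by
      rcases mul_eq_zero.mp hHP0 with h | h
      · exfalso
        exact h2ne (by linear_combination (-1 : ZMod q) * c1 - c2 + 2 * ((A : ZMod q)) * h)
      · exact (ZMod.intCast_zmod_eq_zero_iff_dvd B q).mp h
    refine main B hBdvd 8 ?_
    rw [pellLucas_eq, hHadd]
    linear_combination 2 * hn1
  · -- q ≡ 7 (mod 8): m odd, q ∣ A
    have hmodd : Odd m := by rw [Nat.odd_iff]; omega
    have hn1 : A ^ 2 - 2 * B ^ 2 = -1 := by rw [hnorm, hmodd.neg_one_pow]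
    have c1 : ((A : ZMod q)) ^ 2 - 2 * ((B : ZMod q)) ^ 2 = -1 := by
      have := congrArg (fun x : ℤ => (x : ZMod q)) hn1
      push_cast at this
      linear_combination this
    have hAdvd : (q : ℤ) ∣ A := by
      rcases mul_eq_zero.mp hHP0 with h | h
      · exact (ZMod.intCast_zmod_eq_zero_iff_dvd A q).mp h
      · exfalso
        exact h2ne (by linear_combination c1 - c2 + 4 * ((B : ZMod q)) * h)
    refine main A hAdvd 4 ?_
    rw [pellLucas_eq, hHadd]
    linear_combination (-2 : ℤ) * hn1
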